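/- For integers n ≥ d ≥ 0 and any real x, ∑_{k=d}^{n} C(n,k) (-1)^(d-k) x^(n-k) S(k,d) equals the sum over strictly increasing sequences 1 ≤ j_1 < ... < j_d ≤ n of x^(n-j_d) * ∏_{r=0}^{d-1} (x-(d-r))^(j_{r+1}-j_r-1), with j_0 = 0. -/

import Mathlib

open scoped Classical

/-- Stirling numbers of the second kind. -/
def stirling2 : ℕ → ℕ → ℕ
  | 0, 0 => 1
  | 0, _ + 1 => 0
  | _ + 1, 0 => 0
  | n + 1, d + 1 => stirling2 n d + (d + 1) * stirling2 n (d + 1)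

/-- Strictly increasing sequences `0 = j 0 < j 1 < ... < j d ≤ n`. -/
noncomputable def incSeqs (d n : ℕ) : Finset (Fin (d + 1) → ℕ) :=
  (Fintype.piFinset fun _ => Finset.range (n + 1)).filter
    (fun j => j 0 = 0 ∧ StrictMono j ∧ j (Fin.last d) ≤ n)

/-!
Both sides, as functions `F n d`, satisfy `F n 0 = xⁿ`, `F 0 (d + 1) = 0` and
`F (n + 1) (d + 1) = F n d + (x - (d + 1)) * F n (d + 1)`. For the left side this is Pascal's rule
combined with the Stirling recurrence. On the right, split the sequences by whether `j₁ = 1`: if so,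
dropping `j₀` and lowering the rest by one gives a sequence of length `d`; if `j₁ ≥ 2`, lowering
every `jᵢ` with `i ≥ 1` by one shortens the first gap, whose factor is `x - (d + 1)`.
-/

open Finset

theorem stirling2_eq_stirlingSecond : ∀ n k : ℕ, stirling2 n k = Nat.stirlingSecond n k
  | 0, 0 | 0, _ + 1 | _ + 1, 0 => rfl
  | n + 1, k + 1 => by
    rw [stirling2, Nat.stirlingSecond_succ_succ, stirling2_eq_stirlingSecond n k,
      stirling2_eq_stirlingSecond n (k + 1), add_comm]

theorem neg_one_zpow_natCast_sub {R : Type*} [DivisionRing R] (d k : ℕ) :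
    (-1 : R) ^ ((d : ℤ) - k) = (-1) ^ (d + k) := by
  rw [zpow_sub₀ (by norm_num), zpow_natCast, zpow_natCast, pow_add, div_eq_mul_inv, ← inv_pow,
    inv_neg, inv_one]

section ChooseStirling

variable {R : Type*} [CommRing R]

def chooseStirlingTerm (n d : ℕ) (x : R) (k : ℕ) : R :=
  n.choose k * (-1) ^ (d + k) * x ^ (n - k) * Nat.stirlingSecond k d

def chooseStirlingSum (n d : ℕ) (x : R) : R :=
  ∑ k ∈ range (n + 1), chooseStirlingTerm n d x k

theorem chooseStirlingSum_zero_right (n : ℕ) (x : R) : chooseStirlingSum n 0 x = x ^ n := by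
  rw [chooseStirlingSum, sum_range_succ']
  simp [chooseStirlingTerm]

theorem chooseStirlingSum_zero_left (d : ℕ) (x : R) : chooseStirlingSum 0 (d + 1) x = 0 := by
  simp [chooseStirlingSum, chooseStirlingTerm]

theorem chooseStirlingTerm_succ_succ (n d m : ℕ) (x : R) :
    chooseStirlingTerm (n + 1) (d + 1) x (m + 1) =
      chooseStirlingTerm n d x m - (d + 1) * chooseStirlingTerm n (d + 1) x m +
        x * chooseStirlingTerm n (d + 1) x (m + 1) := by
  have hx : (n.choose (m + 1) : R) * x ^ (n - m) = n.choose (m + 1) * (x * x ^ (n - (m + 1))) := by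
    rcases le_or_gt n m with h | h
    · simp [Nat.choose_eq_zero_of_lt (Nat.lt_succ_of_le h)]
    · rw [← pow_succ', Nat.sub_add_eq, Nat.sub_add_cancel (Nat.sub_pos_of_lt h)]
  simp only [chooseStirlingTerm, Nat.choose_succ_succ', Nat.stirlingSecond_succ_succ,
    Nat.add_sub_add_right, Nat.cast_add, Nat.cast_mul, Nat.cast_one]
  linear_combination
    (-1) ^ (d + m) * ((d + 1) * Nat.stirlingSecond m (d + 1) + Nat.stirlingSecond m d : R) * hx

theorem chooseStirlingSum_succ_succ (n d : ℕ) (x : R) :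
    chooseStirlingSum (n + 1) (d + 1) x =
      chooseStirlingSum n d x + (x - (d + 1)) * chooseStirlingSum n (d + 1) x := by
  have h0 : ∀ m, chooseStirlingTerm m (d + 1) x 0 = 0 := by simp [chooseStirlingTerm]
  have htop : chooseStirlingTerm n (d + 1) x (n + 1) = 0 := by simp [chooseStirlingTerm]
  have hshift : ∑ m ∈ range (n + 1), chooseStirlingTerm n (d + 1) x (m + 1) =
      chooseStirlingSum n (d + 1) x := by
    rw [chooseStirlingSum, ← add_zero (∑ m ∈ range (n + 1), _), ← h0 n, ← sum_range_succ',
      sum_range_succ, htop, add_zero]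
  simp only [chooseStirlingSum] at hshift ⊢
  rw [sum_range_succ', h0, add_zero]
  simp only [chooseStirlingTerm_succ_succ, sum_add_distrib, sum_sub_distrib, ← mul_sum, hshift]
  ring

end ChooseStirling

section IncSeqs

variable {R : Type*} [CommRing R]

def seqWeight (d n : ℕ) (x : R) (j : Fin (d + 1) → ℕ) : R :=
  x ^ (n - j (Fin.last d)) *
    ∏ r : Fin d, (x - ((d : R) - (r : ℕ))) ^ (j r.succ - j r.castSucc - 1)

theorem seqWeight_cons (d n : ℕ) (x : R) (a : ℕ) (t : Fin (d + 1) → ℕ) :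
    seqWeight (d + 1) n x (Fin.cons a t) = (x - (d + 1)) ^ (t 0 - a - 1) * seqWeight d n x t := by
  simp only [seqWeight, Fin.prod_univ_succ, ← Fin.succ_last, Fin.cons_succ, Fin.castSucc_zero,
    Fin.cons_zero, ← Fin.succ_castSucc, Fin.val_zero, Fin.val_succ, Nat.cast_add, Nat.cast_one,
    Nat.cast_zero, sub_zero, add_sub_add_right_eq_sub]
  ring

theorem seqWeight_add_one (d n : ℕ) (x : R) (t : Fin (d + 1) → ℕ) :
    seqWeight d (n + 1) x (fun i => t i + 1) = seqWeight d n x t := by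
  simp only [seqWeight, Nat.add_sub_add_right]

theorem mem_incSeqs {d n : ℕ} {j : Fin (d + 1) → ℕ} :
    j ∈ incSeqs d n ↔ j 0 = 0 ∧ StrictMono j ∧ j (Fin.last d) ≤ n := by
  simp only [incSeqs, mem_filter, Fintype.mem_piFinset, mem_range, and_iff_right_iff_imp]
  rintro ⟨-, hj, hn⟩ i
  exact (hj.monotone (Fin.le_last i)).trans_lt (Nat.lt_succ_of_le hn)

theorem cons_mem_incSeqs {d n a : ℕ} {t : Fin (d + 1) → ℕ} :
    Fin.cons a t ∈ incSeqs (d + 1) n ↔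
      a = 0 ∧ a < t 0 ∧ StrictMono t ∧ t (Fin.last d) ≤ n := by
  rw [mem_incSeqs, Fin.strictMono_cons, ← Fin.succ_last, Fin.cons_zero, Fin.cons_succ]
  constructor
  · rintro ⟨ha, ⟨hat, ht⟩, hn⟩
    exact ⟨ha, hat 0, ht, hn⟩
  · rintro ⟨ha, hat, ht, hn⟩
    exact ⟨ha, ⟨fun i => hat.trans_le (ht.monotone (Fin.zero_le i)), ht⟩, hn⟩

theorem strictMono_sub_one {m : ℕ} {t : Fin m → ℕ} (ht : StrictMono t)
    (hpos : ∀ i, 0 < t i) :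
    StrictMono fun i => t i - 1 := fun a b h => by
  have := ht h
  have := hpos a
  dsimp only
  omega

theorem exists_eq_cons_of_mem_incSeqs {d n : ℕ} {j : Fin (d + 2) → ℕ}
    (hj : j ∈ incSeqs (d + 1) n) :
    ∃ t : Fin (d + 1) → ℕ,
      (∀ i, 0 < t i) ∧ StrictMono t ∧ t (Fin.last d) ≤ n ∧ j = Fin.cons 0 t := by
  rw [← Fin.cons_self_tail j, cons_mem_incSeqs] at hj
  obtain ⟨h0, hpos, ht, hn⟩ := hj
  rw [h0] at hpos
  refine ⟨Fin.tail j, fun i => hpos.trans_le (ht.monotone (Fin.zero_le i)), ht, hn, ?_⟩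
  rw [← h0, Fin.cons_self_tail]

noncomputable def incSeqsSum (n d : ℕ) (x : R) : R :=
  ∑ j ∈ incSeqs d n, seqWeight d n x j

theorem incSeqsSum_zero_right (n : ℕ) (x : R) : incSeqsSum n 0 x = x ^ n := by
  have : incSeqs 0 n = {0} := by
    ext j
    rw [mem_incSeqs, mem_singleton]
    constructor
    · rintro ⟨h0, -, -⟩
      exact funext fun i => Fin.eq_zero i ▸ h0
    · rintro rfl
      exact ⟨rfl, Fin.strictMono_iff_lt_succ.2 fun i => i.elim0, n.zero_le⟩
  simp [incSeqsSum, this, seqWeight]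

theorem incSeqsSum_zero_left (d : ℕ) (x : R) : incSeqsSum 0 (d + 1) x = 0 := by
  refine sum_eq_zero fun j hj => absurd hj fun hj => ?_
  obtain ⟨t, ht0, -, htn, -⟩ := exists_eq_cons_of_mem_incSeqs hj
  exact (ht0 _).ne' (Nat.le_zero.mp htn)

theorem sum_seqWeight_filter_apply_one_eq_one (n d : ℕ) (x : R) :
    ∑ j ∈ (incSeqs (d + 1) (n + 1)).filter (fun j => j 1 = 1), seqWeight (d + 1) (n + 1) x j =
      incSeqsSum n d x := by
  rw [incSeqsSum]
  symm
  refine sum_nbij' (fun t => Fin.cons 0 (fun i => t i + 1)) (fun j i => j i.succ - 1)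
    ?_ ?_ ?_ ?_ ?_
  · intro t ht
    obtain ⟨h0, ht, htn⟩ := mem_incSeqs.1 ht
    rw [mem_filter, cons_mem_incSeqs]
    exact ⟨⟨rfl, Nat.succ_pos _, ht.add_const 1, Nat.succ_le_succ htn⟩,
      by rw [Fin.cons_one, h0]⟩
  · intro j hj
    rw [mem_filter] at hj
    obtain ⟨t, ht0, ht, htn, rfl⟩ := exists_eq_cons_of_mem_incSeqs hj.1
    have h1 : t 0 = 1 := (Fin.cons_one _ _).symm.trans hj.2
    simp only [Fin.cons_succ, mem_incSeqs]
    exact ⟨by omega, strictMono_sub_one ht ht0, by omega⟩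
  · intro t _
    simp
  · intro j hj
    rw [mem_filter] at hj
    obtain ⟨t, ht0, -, -, rfl⟩ := exists_eq_cons_of_mem_incSeqs hj.1
    simp only [Fin.cons_succ, Nat.sub_add_cancel (ht0 _)]
  · intro t ht
    rw [seqWeight_cons, seqWeight_add_one, (mem_incSeqs.1 ht).1, pow_zero, one_mul]

theorem sum_seqWeight_filter_apply_one_ne_one (n d : ℕ) (x : R) :
    ∑ j ∈ (incSeqs (d + 1) (n + 1)).filter (fun j => ¬j 1 = 1), seqWeight (d + 1) (n + 1) x j =
      (x - (d + 1)) * incSeqsSum n (d + 1) x := by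
  rw [incSeqsSum, mul_sum]
  symm
  refine sum_nbij' (fun s => Fin.cons 0 (fun i => s i.succ + 1))
    (fun j => Fin.cons 0 (fun i => j i.succ - 1)) ?_ ?_ ?_ ?_ ?_
  · intro s hs
    obtain ⟨t, ht0, ht, htn, rfl⟩ := exists_eq_cons_of_mem_incSeqs hs
    simp only [Fin.cons_succ, mem_filter, cons_mem_incSeqs, Fin.cons_one]
    exact ⟨⟨trivial, Nat.succ_pos _, ht.add_const 1, Nat.succ_le_succ htn⟩,
      by have := ht0 0; omega⟩
  · intro j hj
    rw [mem_filter] at hj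
    obtain ⟨t, ht0, ht, htn, rfl⟩ := exists_eq_cons_of_mem_incSeqs hj.1
    have h1 : t 0 ≠ 1 := fun h => hj.2 ((Fin.cons_one _ _).trans h)
    simp only [Fin.cons_succ, cons_mem_incSeqs]
    exact ⟨trivial, by have := ht0 0; omega, strictMono_sub_one ht ht0, by omega⟩
  · intro s hs
    obtain ⟨t, -, -, -, rfl⟩ := exists_eq_cons_of_mem_incSeqs hs
    simp only [Fin.cons_succ, Nat.add_sub_cancel]
  · intro j hj
    obtain ⟨t, ht0, -, -, rfl⟩ := exists_eq_cons_of_mem_incSeqs (mem_filter.1 hj).1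
    simp only [Fin.cons_succ, Nat.sub_add_cancel (ht0 _)]
  · intro s hs
    obtain ⟨t, ht0, -, -, rfl⟩ := exists_eq_cons_of_mem_incSeqs hs
    simp only [Fin.cons_succ]
    have hexp : t 0 + 1 - 0 - 1 = t 0 - 0 - 1 + 1 := by have := ht0 0; omega
    rw [seqWeight_cons, seqWeight_cons, seqWeight_add_one, hexp, pow_succ]
    ring

theorem incSeqsSum_succ_succ (n d : ℕ) (x : R) :
    incSeqsSum (n + 1) (d + 1) x = incSeqsSum n d x + (x - (d + 1)) * incSeqsSum n (d + 1) x := by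
  rw [incSeqsSum, ← sum_filter_add_sum_filter_not _ (fun j => j 1 = 1),
    sum_seqWeight_filter_apply_one_eq_one, sum_seqWeight_filter_apply_one_ne_one]

end IncSeqs

theorem chooseStirlingSum_eq_incSeqsSum {R : Type*} [CommRing R] (n d : ℕ) (x : R) :
    chooseStirlingSum n d x = incSeqsSum n d x := by
  induction n generalizing d with
  | zero =>
    cases d with
    | zero => rw [chooseStirlingSum_zero_right, incSeqsSum_zero_right]
    | succ d => rw [chooseStirlingSum_zero_left, incSeqsSum_zero_left]
  | succ n ih =>
    cases d with
    | zero => rw [chooseStirlingSum_zero_right, incSeqsSum_zero_right]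
    | succ d => rw [chooseStirlingSum_succ_succ, incSeqsSum_succ_succ, ih, ih]

theorem stmt6_general (d n : ℕ) (x : ℝ) :
    ∑ k ∈ Finset.Icc d n,
        (n.choose k : ℝ) * (-1 : ℝ) ^ ((d : ℤ) - (k : ℤ)) * x ^ (n - k) *
          (stirling2 k d : ℝ) =
      ∑ j ∈ incSeqs d n,
        x ^ (n - j (Fin.last d)) *
          ∏ r : Fin d, (x - ((d : ℝ) - (r : ℕ))) ^ (j r.succ - j r.castSucc - 1) := by
  have hsupport : ∀ k ∈ range (n + 1), k ∉ Icc d n → chooseStirlingTerm n d x k = 0 := by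
    intro k hk hkd
    have hkd : k < d := by simp only [mem_range, mem_Icc] at hk hkd; omega
    simp [chooseStirlingTerm, Nat.stirlingSecond_eq_zero_of_lt hkd]
  calc _ = ∑ k ∈ Icc d n, chooseStirlingTerm n d x k := by
        simp only [chooseStirlingTerm, neg_one_zpow_natCast_sub, stirling2_eq_stirlingSecond]
    _ = chooseStirlingSum n d x :=
        sum_subset (fun k hk => mem_range.2 (Nat.lt_succ_of_le (mem_Icc.1 hk).2)) hsupport
    _ = _ := chooseStirlingSum_eq_incSeqsSum n d x

theorem stmt6 (d n : ℕ) (hdn : d ≤ n) (x : ℝ) :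
    ∑ k ∈ Finset.Icc d n,
        (n.choose k : ℝ) * (-1 : ℝ) ^ ((d : ℤ) - (k : ℤ)) * x ^ (n - k) *
          (stirling2 k d : ℝ) =
      ∑ j ∈ incSeqs d n,
        x ^ (n - j (Fin.last d)) *
          ∏ r : Fin d, (x - ((d : ℝ) - (r : ℕ))) ^ (j r.succ - j r.castSucc - 1) :=
  stmt6_general d n x
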